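/- The two-variable real polynomial B(p,q) = (q − (345/4)p² − 231p − 104)² − (p + 1)³(75p + 104)² is irreducible in the polynomial ring ℝ[p,q]. -/

import Mathlib

open MvPolynomial

/-- The polynomial `B(p,q) = (q − (345/4)p² − 231p − 104)² − (p + 1)³(75p + 104)²`
in `ℝ[p,q]`, with `X 0 = p` and `X 1 = q`. -/
noncomputable def Bpoly : MvPolynomial (Fin 2) ℝ :=
  (X 1 - C (345 / 4 : ℝ) * X 0 ^ 2 - C (231 : ℝ) * X 0 - C (104 : ℝ)) ^ 2 -
    (X 0 + C (1 : ℝ)) ^ 3 * (C (75 : ℝ) * X 0 + C (104 : ℝ)) ^ 2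

/-! Viewed in `(ℝ[p])[q]`, `B = (q - f)² - g` is a monic quadratic over the integrally closed ring
`ℝ[p]`, so by Gauss's lemma it is irreducible as soon as it has no root in `ℝ(p)`, i.e. as soon as
`g` is not a square in `ℝ(p)`; by integral closedness this means `g` is not a square in `ℝ[p]`.
And `g = (p + 1)³(75p + 104)²` is negative at `p = -6/5`. -/

theorem IsIntegrallyClosed.isSquare_algebraMap_iff {R K : Type*} [CommRing R] [Field K]
    [Algebra R K] [IsFractionRing R K] [IsIntegrallyClosed R] {b : R} :
    IsSquare (algebraMap R K b) ↔ IsSquare b := by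
  refine ⟨fun ⟨s, hs⟩ => ?_, IsSquare.map _⟩
  have hs_int : IsIntegral R s := ⟨Polynomial.X ^ 2 - Polynomial.C b,
    Polynomial.monic_X_pow_sub_C b two_ne_zero, by simp [hs, sq]⟩
  obtain ⟨r, rfl⟩ := isIntegral_iff.mp hs_int
  exact ⟨r, IsFractionRing.injective R K (by simpa using hs)⟩

namespace Polynomial

variable {R : Type*} [CommRing R] [IsDomain R] [IsIntegrallyClosed R] {b : R}

theorem irreducible_X_sq_sub_C (hb : ¬IsSquare b) : Irreducible (X ^ 2 - C b) := by
  rw [(monic_X_pow_sub_C b two_ne_zero).irreducible_iff_irreducible_map_fraction_map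
    (K := FractionRing R)]
  simp only [Polynomial.map_sub, Polynomial.map_pow, map_X, map_C]
  refine X_pow_sub_C_irreducible_of_prime Nat.prime_two fun s hs => hb ?_
  exact IsIntegrallyClosed.isSquare_algebraMap_iff.mp ⟨s, by rw [← hs, sq]⟩

theorem irreducible_X_sub_C_sq_sub_C (a : R) (hb : ¬IsSquare b) :
    Irreducible ((X - C a) ^ 2 - C b) := by
  rw [← MulEquiv.irreducible_iff (taylorEquiv a)]
  convert irreducible_X_sq_sub_C hb using 1
  change taylor a _ = _
  simp [taylor_apply]

end Polynomial

theorem Bpoly_irreducible : Irreducible Bpoly := by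
  let e : MvPolynomial (Fin 2) ℝ ≃ₐ[ℝ] Polynomial (MvPolynomial (Fin 1) ℝ) :=
    (renameEquiv ℝ (Equiv.swap 0 1)).trans (finSuccEquiv ℝ 1)
  have he : e Bpoly =
      (Polynomial.X - Polynomial.C (C (345 / 4) * X 0 ^ 2 + C 231 * X 0 + C 104)) ^ 2 -
        Polynomial.C ((X 0 + C 1) ^ 3 * (C 75 * X 0 + C 104) ^ 2) := by
    have hp : e (X 0) = Polynomial.C (X 0) := by
      simp only [e, AlgEquiv.trans_apply, renameEquiv_apply, rename_X, Equiv.swap_apply_left]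
      exact finSuccEquiv_X_succ (n := 1) (R := ℝ) (j := 0)
    have hq : e (X 1) = Polynomial.X := by simp [e, finSuccEquiv_X_zero]
    have hC (r : ℝ) : e (C r) = Polynomial.C (C r) := by simp [e, finSuccEquiv_apply]
    simp only [Bpoly, map_sub, map_add, map_mul, map_pow, hp, hq, hC]
    ring
  have hg : ¬IsSquare ((X 0 + C 1) ^ 3 * (C 75 * X 0 + C 104) ^ 2 : MvPolynomial (Fin 1) ℝ) :=
    fun h => not_isSquare_of_neg (by norm_num) (h.map (eval fun _ => (-6 / 5 : ℝ)))
  refine (MulEquiv.irreducible_iff e).mp ?_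
  rw [he]
  exact Polynomial.irreducible_X_sub_C_sq_sub_C _ hg
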